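/- arXiv:math/9904113 — 2 statements merged into one kernel-verified Lean document; each statement's English description precedes it below -/
import Mathlib

section
/- In the Lie algebra F̃₊ presented by generators x̃_i[k] (i = 1,…,n, k ∈ ℤ) and relations (z−w)[x̃_i(z), x̃_j(w)] = 0 together with ad(x̃_i[0])^{1−a_{ij}}(x̃_j[l]) = 0 for all i ≠ j and l ∈ ℤ, the following identity holds for all p ≥ 1 and all integers k, k₁,…,k_p: ad(x̃_i[0])^p(x̃_j[k + k₁ + ⋯ + k_p]) = ad(x̃_i[k₁]) ⋯ ad(x̃_i[k_p])(x̃_j[k]). In particular, the relations ad(x̃_i[0])^{1−a_{ij}}(x̃_j[l]) = 0 imply the full 'field' Serre relations ad(x̃_i(z₁))⋯ad(x̃_i(z_{1−a_{ij}}))(x̃_j(w)) = 0. -/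
variable {n : ℕ}

/-- The defining relations: the coefficients of `(z-w)[x̃_i(z), x̃_j(w)] = 0` together with
the zero-mode Serre relations `ad(x̃_i[0])^{1-a_{ij}}(x̃_j[l]) = 0` for `i ≠ j`. -/
def loopRelsZeroMode (A : Matrix (Fin n) (Fin n) ℤ) : Set (FreeLieAlgebra ℂ (Fin n × ℤ)) :=
  {z | ∃ (i j : Fin n) (k l : ℤ),
      z = ⁅FreeLieAlgebra.of ℂ (i, k + 1), FreeLieAlgebra.of ℂ (j, l)⁆
          - ⁅FreeLieAlgebra.of ℂ (i, k), FreeLieAlgebra.of ℂ (j, l + 1)⁆} ∪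
  {z | ∃ i j : Fin n, i ≠ j ∧ ∃ l : ℤ,
      z = ((LieAlgebra.ad ℂ (FreeLieAlgebra ℂ (Fin n × ℤ))
              (FreeLieAlgebra.of ℂ (i, (0 : ℤ)))) ^ (1 - A i j).toNat)
            (FreeLieAlgebra.of ℂ (j, l))}

/-- The Lie algebra `F̃₊` presented by generators `x̃_i[k]`, the current commutation
relations and the zero-mode Serre relations. -/
def FPlusZM (A : Matrix (Fin n) (Fin n) ℤ) :=
  FreeLieAlgebra ℂ (Fin n × ℤ) ⧸
    LieSubmodule.lieSpan ℂ (FreeLieAlgebra ℂ (Fin n × ℤ)) (loopRelsZeroMode A)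

noncomputable instance (A : Matrix (Fin n) (Fin n) ℤ) : LieRing (FPlusZM A) :=
  inferInstanceAs (LieRing (FreeLieAlgebra ℂ (Fin n × ℤ) ⧸
    LieSubmodule.lieSpan ℂ (FreeLieAlgebra ℂ (Fin n × ℤ)) (loopRelsZeroMode A)))

noncomputable instance (A : Matrix (Fin n) (Fin n) ℤ) : LieAlgebra ℂ (FPlusZM A) :=
  inferInstanceAs (LieAlgebra ℂ (FreeLieAlgebra ℂ (Fin n × ℤ) ⧸
    LieSubmodule.lieSpan ℂ (FreeLieAlgebra ℂ (Fin n × ℤ)) (loopRelsZeroMode A)))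

/-- The generator `x̃_i[k]`. -/
noncomputable def XZM (A : Matrix (Fin n) (Fin n) ℤ) (i : Fin n) (k : ℤ) : FPlusZM A :=
  LieSubmodule.Quotient.mk
    (N := LieSubmodule.lieSpan ℂ (FreeLieAlgebra ℂ (Fin n × ℤ)) (loopRelsZeroMode A))
    (FreeLieAlgebra.of ℂ (i, k))


section Stmt11Aux

variable {n : ℕ} (A : Matrix (Fin n) (Fin n) ℤ)

private noncomputable abbrev NZM : LieSubmodule ℂ (FreeLieAlgebra ℂ (Fin n × ℤ)) (FreeLieAlgebra ℂ (Fin n × ℤ)) :=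
  LieSubmodule.lieSpan ℂ (FreeLieAlgebra ℂ (Fin n × ℤ)) (loopRelsZeroMode A)

private lemma XZM_eq (i : Fin n) (k : ℤ) :
    XZM A i k = LieSubmodule.Quotient.mk (N := NZM A) (FreeLieAlgebra.of ℂ (i, k)) := rfl

private lemma mk_bracket' (a b : FreeLieAlgebra ℂ (Fin n × ℤ)) :
    (LieSubmodule.Quotient.mk (N := NZM A) ⁅a, b⁆ : FPlusZM A)
      = ⁅(LieSubmodule.Quotient.mk (N := NZM A) a : FPlusZM A),
         (LieSubmodule.Quotient.mk (N := NZM A) b : FPlusZM A)⁆ := rfl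

private lemma XZM_rel (i j : Fin n) (k l : ℤ) :
    ⁅XZM A i (k + 1), XZM A j l⁆ = ⁅XZM A i k, XZM A j (l + 1)⁆ := by
  have hmem : (⁅FreeLieAlgebra.of ℂ (i, k + 1), FreeLieAlgebra.of ℂ (j, l)⁆
      - ⁅FreeLieAlgebra.of ℂ (i, k), FreeLieAlgebra.of ℂ (j, l + 1)⁆) ∈ NZM A :=
    LieSubmodule.subset_lieSpan (Or.inl ⟨i, j, k, l, rfl⟩)
  rw [XZM_eq, XZM_eq, XZM_eq, XZM_eq]
  exact (mk_bracket' A _ _).symm.trans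
    (((Submodule.Quotient.eq ((NZM A).toSubmodule)).2 hmem).trans (mk_bracket' A _ _))

private lemma XZM_shift (i j : Fin n) (k : ℤ) :
    ∀ l : ℤ, ⁅XZM A i k, XZM A j l⁆ = ⁅XZM A i 0, XZM A j (l + k)⁆ := by
  induction k using Int.induction_on with
  | zero => intro l; simp
  | succ k ih =>
    intro l
    rw [XZM_rel, ih (l + 1), show l + 1 + (k : ℤ) = l + ((k : ℤ) + 1) by ring]
  | pred k ih =>
    intro l
    have h1 := XZM_rel A i j (-(k : ℤ) - 1) (l - 1)
    rw [show (-(k : ℤ) - 1 + 1) = -(k : ℤ) by ring, show l - 1 + 1 = l by ring] at h1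
    rw [← h1, ih (l - 1), show l - 1 + -(k : ℤ) = l + (-(k : ℤ) - 1) by ring]

private lemma XZM_self (i : Fin n) (k l : ℤ) : ⁅XZM A i k, XZM A i l⁆ = 0 := by
  have h1 := XZM_shift A i i k l
  have h2 := XZM_shift A i i l k
  have key : ⁅XZM A i 0, XZM A i (l + k)⁆ = -⁅XZM A i 0, XZM A i (l + k)⁆ := by
    calc ⁅XZM A i 0, XZM A i (l + k)⁆ = ⁅XZM A i k, XZM A i l⁆ := h1.symm
      _ = -⁅XZM A i l, XZM A i k⁆ := (lie_skew _ _).symm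
      _ = -⁅XZM A i 0, XZM A i (k + l)⁆ := by rw [h2]
      _ = -⁅XZM A i 0, XZM A i (l + k)⁆ := by rw [add_comm k l]
  have hz : ⁅XZM A i 0, XZM A i (l + k)⁆ = 0 := by
    have h2s : (2 : ℂ) • ⁅XZM A i 0, XZM A i (l + k)⁆ = 0 := by
      rw [two_smul]
      nth_rewrite 1 [key]
      exact neg_add_cancel _
    rcases smul_eq_zero.mp h2s with h | h
    · exact absurd h two_ne_zero
    · exact h
  rw [h1, hz]

private lemma XZM_ad_comm (i : Fin n) (t : ℤ) (y : FPlusZM A) :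
    ⁅XZM A i 0, ⁅XZM A i t, y⁆⁆ = ⁅XZM A i t, ⁅XZM A i 0, y⁆⁆ := by
  rw [leibniz_lie, XZM_self, zero_lie, zero_add]

private lemma XZM_bracket_ad_pow (i : Fin n) (t : ℤ) (p : ℕ) (y : FPlusZM A) :
    ⁅XZM A i t, ((LieAlgebra.ad ℂ (FPlusZM A) (XZM A i 0)) ^ p) y⁆
      = ((LieAlgebra.ad ℂ (FPlusZM A) (XZM A i 0)) ^ p) ⁅XZM A i t, y⁆ := by
  induction p generalizing y with
  | zero => simp
  | succ p ih =>
    rw [pow_succ, Module.End.mul_apply, Module.End.mul_apply, LieAlgebra.ad_apply,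
      LieAlgebra.ad_apply, ih, XZM_ad_comm]

private lemma XZM_part1 (i j : Fin n) (ks : List ℤ) (k : ℤ) :
    ((LieAlgebra.ad ℂ (FPlusZM A) (XZM A i 0)) ^ ks.length) (XZM A j (k + ks.sum))
      = ks.foldr (fun t acc => ⁅XZM A i t, acc⁆) (XZM A j k) := by
  induction ks generalizing k with
  | nil => simp
  | cons t ks ih =>
    simp only [List.length_cons, List.sum_cons, List.foldr_cons]
    rw [← ih, XZM_bracket_ad_pow, XZM_shift, pow_succ, Module.End.mul_apply,
      LieAlgebra.ad_apply, show k + ks.sum + t = k + (t + ks.sum) by ring]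

private lemma XZM_mk_ad_pow (x y : FreeLieAlgebra ℂ (Fin n × ℤ)) (m : ℕ) :
    (LieSubmodule.Quotient.mk (N := NZM A)
        (((LieAlgebra.ad ℂ (FreeLieAlgebra ℂ (Fin n × ℤ)) x) ^ m) y) : FPlusZM A)
      = ((LieAlgebra.ad ℂ (FPlusZM A)
          (LieSubmodule.Quotient.mk (N := NZM A) x)) ^ m)
          (LieSubmodule.Quotient.mk (N := NZM A) y) := by
  induction m generalizing y with
  | zero => simp; rfl
  | succ m ih =>
    rw [pow_succ, pow_succ, Module.End.mul_apply,
      LieAlgebra.ad_apply, ih ⁅x, y⁆]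
    exact rfl

private lemma XZM_serre0 (i j : Fin n) (hij : i ≠ j) (l : ℤ) :
    ((LieAlgebra.ad ℂ (FPlusZM A) (XZM A i 0)) ^ (1 - A i j).toNat) (XZM A j l) = 0 := by
  have hmem : (((LieAlgebra.ad ℂ (FreeLieAlgebra ℂ (Fin n × ℤ))
        (FreeLieAlgebra.of ℂ (i, (0 : ℤ)))) ^ (1 - A i j).toNat)
        (FreeLieAlgebra.of ℂ (j, l))) ∈ NZM A :=
    LieSubmodule.subset_lieSpan (Or.inr ⟨i, j, hij, l, rfl⟩)
  rw [XZM_eq, XZM_eq, ← XZM_mk_ad_pow]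
  exact (LieSubmodule.Quotient.mk_eq_zero' (N := NZM A)).2 hmem

end Stmt11Aux

/-- In the Lie algebra presented by the relations
`[x̃_i[k+1], x̃_j[l]] = [x̃_i[k], x̃_j[l+1]]` and `ad(x̃_i[0])^{1-a_{ij}}(x̃_j[l]) = 0`
(`i ≠ j`), for all `p ≥ 1` and integers `k, k₁, …, k_p` one has
`ad(x̃_i[0])^p(x̃_j[k+k₁+⋯+k_p]) = ad(x̃_i[k₁])⋯ad(x̃_i[k_p])(x̃_j[k])`; in particular the
full field Serre relations `ad(x̃_i(z₁))⋯ad(x̃_i(z_{1-a_{ij}}))(x̃_j(w)) = 0` hold. -/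
theorem stmt11 (A : Matrix (Fin n) (Fin n) ℤ)
    (hdiag : ∀ i, A i i = 2)
    (hoff : ∀ i j, i ≠ j → A i j ≤ 0) :
    (∀ (i j : Fin n) (ks : List ℤ) (k : ℤ),
      ((LieAlgebra.ad ℂ (FPlusZM A) (XZM A i 0)) ^ ks.length) (XZM A j (k + ks.sum))
        = ks.foldr (fun t acc => ⁅XZM A i t, acc⁆) (XZM A j k)) ∧
    (∀ i j : Fin n, i ≠ j → ∀ (ks : List ℤ) (l : ℤ), ks.length = (1 - A i j).toNat →
      ks.foldr (fun t acc => ⁅XZM A i t, acc⁆) (XZM A j l) = 0) := by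
  refine ⟨fun i j ks k => XZM_part1 A i j ks k, fun i j hij ks l hlen => ?_⟩
  rw [← XZM_part1 A i j ks l, hlen, XZM_serre0 A i j hij]
end

section
/- Let U_ℏ𝔫₊ be the C[[ℏ]]-algebra generated by e₁,…,e_n modulo the quantum Serre relations Σ_{k=0}^{1−a_{ij}} (−1)^k binom_{q^{d_i}}(1−a_{ij},k) e_i^k e_j e_i^{1−a_{ij}−k} = 0 with q = e^ℏ, graded by ℕⁿ with deg(e_i) = ε_i. Suppose that for each α ∈ ℕⁿ the graded component U_ℏ𝔫₊[α] is finitely generated over C[[ℏ]], that U_ℏ𝔫₊[α]/ℏU_ℏ𝔫₊[α] ≅ U𝔫₊[α] (the classical enveloping algebra component), and that there is a surjective graded algebra morphism p_ℏ : U_ℏ𝔫₊ → ⟨V⟩ onto a free graded C[[ℏ]]-module ⟨V⟩ whose component ⟨V⟩[α] has rank equal to dim U𝔫₊[α]. Then each U_ℏ𝔫₊[α] is a free C[[ℏ]]-module of rank dim U𝔫₊[α], and p_ℏ is an isomorphism. -/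
/-- abstract module-theoretic core of the PBW theorem for `U_ℏ𝔫₊`.
For each multidegree `α ∈ ℕⁿ`, let `M α` be the degree-`α` component of `U_ℏ𝔫₊` (a finitely
generated `ℂ[[ℏ]]`-module) and `N α` the degree-`α` component `⟨V⟩[α]` of the shuffle algebra
(a finite free `ℂ[[ℏ]]`-module).  Suppose we are given surjective morphisms
`p α : M α → N α` (the restriction of `p_ℏ`), and that `M α/ℏM α` and `N α/ℏN α` are
isomorphic (both being isomorphic to `U𝔫₊[α]`, whose dimension equals the rank of `N α`).
Then each `M α` is a free `ℂ[[ℏ]]`-module of the same rank as `N α`, and each `p α` is an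
isomorphism (so `p_ℏ` is an isomorphism). -/
theorem stmt16 (n : ℕ) (M N : (Fin n → ℕ) → Type*)
    [∀ α, AddCommGroup (M α)] [∀ α, Module (PowerSeries ℂ) (M α)]
    [∀ α, AddCommGroup (N α)] [∀ α, Module (PowerSeries ℂ) (N α)]
    [∀ α, Module.Finite (PowerSeries ℂ) (M α)]
    [∀ α, Module.Free (PowerSeries ℂ) (N α)]
    [∀ α, Module.Finite (PowerSeries ℂ) (N α)]
    (p : ∀ α, M α →ₗ[PowerSeries ℂ] N α)
    (hsurj : ∀ α, Function.Surjective (p α))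
    (hdim : ∀ α, Nonempty
      ((M α ⧸ ((Ideal.span {(PowerSeries.X : PowerSeries ℂ)}) •
          (⊤ : Submodule (PowerSeries ℂ) (M α))))
        ≃ₗ[PowerSeries ℂ]
       (N α ⧸ ((Ideal.span {(PowerSeries.X : PowerSeries ℂ)}) •
          (⊤ : Submodule (PowerSeries ℂ) (N α)))))) :
    ∀ α, Module.Free (PowerSeries ℂ) (M α) ∧ Function.Bijective (p α) := by
  intro α
  set R := PowerSeries ℂ with hR
  obtain ⟨e⟩ := hdim α
  rw [← PowerSeries.maximalIdeal_eq_span_X] at e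
  set 𝔪 := IsLocalRing.maximalIdeal R with h𝔪
  -- choose a finite basis of N α
  let ι := Module.Free.ChooseBasisIndex R (N α)
  let b : Module.Basis ι R (N α) := Module.Free.chooseBasis R (N α)
  -- lift the images (under e.symm) of the residue classes of the basis vectors to M α
  choose g hg using fun i : ι =>
    Submodule.mkQ_surjective (𝔪 • (⊤ : Submodule R (M α)))
      (e.symm (Submodule.mkQ (𝔪 • (⊤ : Submodule R (N α))) (b i)))
  -- the g i generate M α, by Nakayama's lemma
  have hspan : Submodule.span R (Set.range g) = ⊤ := by
    rw [← IsLocalRing.map_mkQ_eq_top, Submodule.map_span, ← Set.range_comp]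
    have h1 : (Submodule.mkQ (𝔪 • (⊤ : Submodule R (M α)))) ∘ g
        = ⇑e.symm ∘ (Submodule.mkQ (𝔪 • (⊤ : Submodule R (N α)))) ∘ b := by
      funext i; exact hg i
    rw [h1, Set.range_comp, Set.range_comp, ← e.symm.coe_coe, Submodule.span_image, Submodule.span_image,
      b.span_eq]
    simp
  -- the resulting surjection (ι → R) → M α
  let f : (ι → R) →ₗ[R] M α := Fintype.linearCombination R g
  have hfsurj : Function.Surjective f := by
    rw [← LinearMap.range_eq_top, Fintype.range_linearCombination, hspan]
  -- compose with p α and the coordinate isomorphism of N α to get a surjective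
  -- endomorphism of ι → R, which is injective
  let φ : (ι → R) →ₗ[R] (ι → R) := b.equivFun.toLinearMap ∘ₗ (p α) ∘ₗ f
  have hφsurj : Function.Surjective φ :=
    b.equivFun.surjective.comp ((hsurj α).comp hfsurj)
  have hφinj : Function.Injective φ :=
    OrzechProperty.injective_of_surjective_endomorphism φ hφsurj
  -- hence p α ∘ f is injective, so f is injective, so f is an isomorphism
  have hpf : Function.Injective ((p α) ∘ₗ f) := by
    intro x y hxy
    apply hφinj
    simp only [φ, LinearMap.comp_apply] at hxy ⊢
    rw [hxy]
  have hfinj : Function.Injective f := by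
    intro x y hxy
    exact hpf (by simp only [LinearMap.comp_apply, hxy])
  have hfree : Module.Free R (M α) :=
    Module.Free.of_equiv (LinearEquiv.ofBijective f ⟨hfinj, hfsurj⟩)
  refine ⟨hfree, ?_, hsurj α⟩
  -- injectivity of p α : from injectivity of p α ∘ f and surjectivity of f
  intro x y hxy
  obtain ⟨a, rfl⟩ := hfsurj x
  obtain ⟨c, rfl⟩ := hfsurj y
  exact congrArg f (hpf hxy)
end
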